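/- In the overalgebra 𝐀 of the second type, if (x,y) ∈ A×A does not belong to β̃, then there exists f ∈ Pol₁(𝐀) (a composition of maps in F_A together with constant maps and the identity) such that (e₀(f(x)), e₀(f(y))) ∉ β; consequently β̃ ≥ β̂, the largest congruence of 𝐀 restricting to β on B. -/
import Mathlib


namespace Overalg

variable {A : Type*}

/-- `θ` is an equivalence relation on the whole type `A`, viewed as a set of pairs. -/
def IsEquivRel (θ : Set (A × A)) : Prop :=
  (∀ x : A, (x, x) ∈ θ) ∧ (∀ x y : A, (x, y) ∈ θ → (y, x) ∈ θ) ∧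
    (∀ x y z : A, (x, y) ∈ θ → (y, z) ∈ θ → (x, z) ∈ θ)

/-- `θ` is an equivalence relation on the subset `B` of `A`, viewed as a set of pairs. -/
def IsEquivOn (B : Set A) (θ : Set (A × A)) : Prop :=
  θ ⊆ B ×ˢ B ∧ (∀ x ∈ B, (x, x) ∈ θ) ∧ (∀ x y : A, (x, y) ∈ θ → (y, x) ∈ θ) ∧
    (∀ x y z : A, (x, y) ∈ θ → (y, z) ∈ θ → (x, z) ∈ θ)

/-- The clone of unary polynomials of the unary algebra `⟨A, F⟩`: the smallest set of
maps `A → A` containing `F`, the identity and all constants, closed under composition. -/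
inductive Pol1 (F : Set (A → A)) : (A → A) → Prop
  | base : ∀ f ∈ F, Pol1 F f
  | id : Pol1 F _root_.id
  | const : ∀ a : A, Pol1 F (fun _ => a)
  | comp : ∀ f g : A → A, Pol1 F f → Pol1 F g → Pol1 F (f ∘ g)

/-- A congruence of the unary algebra `⟨A, F⟩`. -/
def IsCon (F : Set (A → A)) (θ : Set (A × A)) : Prop :=
  IsEquivRel θ ∧ ∀ f ∈ F, ∀ p ∈ θ, (f p.1, f p.2) ∈ θ

end Overalg

namespace Overalg

/-- The data of an *overalgebra of the second type*, built over a finite base algebra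
`𝐁 = ⟨B 0, F⟩` and the congruence `β = Cg^𝐁((a 1, b 1), …, (a (K-1), b (K-1)))`.
The universe is `A = B 0 ∪ B 1 ∪ ⋯ ∪ B (u*K)`, a chain of copies of `B 0` glued at
tie-points as in the paper; `π j : B 0 → B j` are bijections with inverses `σ j`;
`T 1 | ⋯ | T N` is a partition of the multiples of `K` in `{0, …, u*K}`, and the maps
`e j` are the retractions described in the construction. -/
structure OvII (A : Type*) where
  K : ℕ
  u : ℕ
  N : ℕ
  B : ℕ → Set A
  F : Set (A → A)
  a : ℕ → A
  b : ℕ → A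
  π : ℕ → A → A
  σ : ℕ → A → A
  T : ℕ → Set ℕ
  e : ℕ → A → A
  β : Set (A × A)
  hfin : Finite A
  hK : 2 ≤ K
  hu : 1 ≤ u
  /-- `A = B 0 ∪ ⋯ ∪ B (u*K)` -/
  hA : ∀ x : A, ∃ j ≤ u * K, x ∈ B j
  /-- the base operations map `B 0` into itself -/
  hF : ∀ f ∈ F, Set.MapsTo f (B 0) (B 0)
  /-- the generating pairs lie in `B 0` -/
  hab : ∀ i, 1 ≤ i → i ≤ K - 1 → a i ∈ B 0 ∧ b i ∈ B 0
  /-- `π 0` is the identity -/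
  hπ0 : ∀ x : A, π 0 x = x
  /-- `π j` is a bijection of `B 0` onto `B j` -/
  hπ : ∀ j ≤ u * K, Set.BijOn (π j) (B 0) (B j)
  /-- `σ j` inverts `π j` on `B 0` -/
  hσ : ∀ j ≤ u * K, ∀ c ∈ B 0, σ j (π j c) = c
  /-- `β` is the smallest congruence of `𝐁` containing the pairs `(a i, b i)` -/
  hβ : IsLeast {γ : Set (A × A) |
      (IsEquivOn (B 0) γ ∧ ∀ f ∈ F, ∀ p ∈ γ, (f p.1, f p.2) ∈ γ) ∧
      ∀ i, 1 ≤ i → i ≤ K - 1 → (a i, b i) ∈ γ} β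
  /-- adjacent intersections at a multiple of `K`:
  `B ℓ ∩ B (ℓ+1) = {a₁^ℓ} = {a₁^{ℓ+1}}` -/
  hadj0 : ∀ j < u * K, j % K = 0 →
    B j ∩ B (j + 1) = {π j (a 1)} ∧ π j (a 1) = π (j + 1) (a 1)
  /-- adjacent intersections in the middle of a segment:
  `B (ℓ+i) ∩ B (ℓ+i+1) = {b_i^{ℓ+i}} = {a_{i+1}^{ℓ+i+1}}` for `1 ≤ i ≤ K-2` -/
  hadjm : ∀ j < u * K, 1 ≤ j % K → j % K ≤ K - 2 →
    B j ∩ B (j + 1) = {π j (b (j % K))} ∧ π j (b (j % K)) = π (j + 1) (a (j % K + 1))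
  /-- adjacent intersections at the end of a segment:
  `B (ℓ+K-1) ∩ B (ℓ+K) = {b_{K-1}^{ℓ+K-1}} = {a₁^{ℓ+K}}` -/
  hadjl : ∀ j < u * K, j % K = K - 1 →
    B j ∩ B (j + 1) = {π j (b (K - 1))} ∧ π j (b (K - 1)) = π (j + 1) (a 1)
  /-- the triple meets: `B (ℓ-1) ∩ B (ℓ+1) = {a₁^ℓ}` for `ℓ` a positive multiple
  of `K` with `ℓ < u*K` -/
  htriple : ∀ j, 0 < j → j + 1 ≤ u * K → j % K = 0 → B (j - 1) ∩ B (j + 1) = {π j (a 1)}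
  /-- all other intersections are empty -/
  hempty : ∀ i j, i ≤ u * K → j ≤ u * K → i + 2 ≤ j →
    ¬(j = i + 2 ∧ (i + 1) % K = 0) → B i ∩ B j = ∅
  /-- each block `T n` consists of multiples of `K` that are at most `u*K` -/
  hT1 : ∀ n, 1 ≤ n → n ≤ N → T n ⊆ {j : ℕ | j ≤ u * K ∧ K ∣ j}
  /-- the blocks `T 1, …, T N` partition `{0, K, 2K, …, uK}` -/
  hT2 : ∀ j ≤ u * K, K ∣ j → ∃! n, 1 ≤ n ∧ n ≤ N ∧ j ∈ T n
  /-- for `ℓ` a multiple of `K`: `e ℓ` maps `B j` onto `B ℓ` via `S_{j,ℓ}` when `j` is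
  in the same block of the partition as `ℓ` … -/
  heK1 : ∀ n, 1 ≤ n → n ≤ N → ∀ ℓ ∈ T n, ∀ j ∈ T n, ∀ c ∈ B 0, e ℓ (π j c) = π ℓ c
  /-- … and sends everything else to the tie-point `a₁^ℓ` -/
  heK2 : ∀ n, 1 ≤ n → n ≤ N → ∀ ℓ ∈ T n, ∀ x : A, (∀ j ∈ T n, x ∉ B j) →
    e ℓ x = π ℓ (a 1)
  /-- for `j = ℓ + i` with `1 ≤ i < K`: `e j` is the identity on `B j` … -/
  heM1 : ∀ j ≤ u * K, j % K ≠ 0 → ∀ x ∈ B j, e j x = x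
  /-- … maps everything to the left of `B j` to the left tie-point `a_i^j` … -/
  heM2 : ∀ j ≤ u * K, j % K ≠ 0 → ∀ j' < j, ∀ x ∈ B j', x ∉ B j →
    e j x = π j (a (j % K))
  /-- … and everything to the right of `B j` to the right tie-point `b_i^j` -/
  heM3 : ∀ j ≤ u * K, j % K ≠ 0 → ∀ j', j < j' → j' ≤ u * K → ∀ x ∈ B j', x ∉ B j →
    e j x = π j (b (j % K))

namespace OvII

variable {A : Type*} (O : OvII A)

/-- `q i j = S i j ∘ e i`; here `q i 0 = σ i ∘ e i` and `q 0 j = π j ∘ e 0`. -/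
def qi0 (i : ℕ) : A → A := fun x => O.σ i (O.e i x)

/-- `q 0 j = π j ∘ e 0`. -/
def q0j (j : ℕ) : A → A := fun x => O.π j (O.e 0 x)

/-- The operations of the overalgebra:
`F_A = {f ∘ e 0 : f ∈ F} ∪ {q i 0 : 0 ≤ i ≤ uK} ∪ {q 0 j : 1 ≤ j ≤ uK}`. -/
def FA : Set (A → A) :=
  {g | ∃ f ∈ O.F, g = f ∘ O.e 0} ∪ {g | ∃ i ≤ O.u * O.K, g = O.qi0 i} ∪
    {g | ∃ j, 1 ≤ j ∧ j ≤ O.u * O.K ∧ g = O.q0j j}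

/-- A congruence of the base algebra `𝐁 = ⟨B 0, F⟩`. -/
def ConB (θ : Set (A × A)) : Prop :=
  IsEquivOn (O.B 0) θ ∧ ∀ f ∈ O.F, ∀ p ∈ θ, (f p.1, f p.2) ∈ θ

/-- A tie-point `t j` of `B j`: `a₁^j` when `K ∣ j`, and `a_i^j` when `j = ℓ + i`,
`1 ≤ i < K`. -/
def tie (j : ℕ) : A := O.π j (O.a (if j % O.K = 0 then 1 else j % O.K))

/-- `β^j = {(π j x, π j y) : (x, y) ∈ β}`, the copy of `β` on `B j`. -/
def bj (j : ℕ) : Set (A × A) := {p | ∃ q ∈ O.β, p = (O.π j q.1, O.π j q.2)}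

/-- `t j / β^j`, the `β^j`-class of the tie-point of `B j`. -/
def tcls (j : ℕ) : Set A := {x | (O.tie j, x) ∈ O.bj j}

/-- `β⋆ = ⋃_{j=0}^{uK} β^j ∪ (⋃_{j=0}^{uK} t_j/β^j)²`. -/
def bstar : Set (A × A) :=
  {p | ∃ j ≤ O.u * O.K, p ∈ O.bj j} ∪
    {p | (∃ j ≤ O.u * O.K, p.1 ∈ O.tcls j) ∧ (∃ j ≤ O.u * O.K, p.2 ∈ O.tcls j)}

/-- The `θ`-class of `c`. -/
def cls (_O : OvII A) (θ : Set (A × A)) (c : A) : Set A := {x | (c, x) ∈ θ}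

/-- For `c ∈ B 0` with `β`-class `C_r = c/β`, this is `⋃_{ℓ ∈ T n} C_r^ℓ`. -/
def wing (n : ℕ) (c : A) : Set A := ⋃ ℓ ∈ O.T n, O.π ℓ '' O.cls O.β c

/-- `β̃ = β⋆ ∪ ⋃_{r=1}^{m-1} ⋃_{n=1}^{N} (⋃_{ℓ ∈ 𝒯_n} C_r^ℓ)²`, where the classes of
`β` other than the class of `a 1` are parametrized by their elements `c`. -/
def btilde : Set (A × A) :=
  O.bstar ∪
    {p | ∃ n, 1 ≤ n ∧ n ≤ O.N ∧ ∃ c ∈ O.B 0, (c, O.a 1) ∉ O.β ∧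
      p.1 ∈ O.wing n c ∧ p.2 ∈ O.wing n c}

end OvII

end Overalg

namespace Overalg

namespace OvII

variable {A : Type*} (O : OvII A)

lemma beta_sub' : O.β ⊆ O.B 0 ×ˢ O.B 0 := O.hβ.1.1.1.1

lemma beta_refl' : ∀ x ∈ O.B 0, (x, x) ∈ O.β := O.hβ.1.1.1.2.1

lemma beta_symm' : ∀ x y : A, (x, y) ∈ O.β → (y, x) ∈ O.β := O.hβ.1.1.1.2.2.1

lemma beta_trans' : ∀ x y z : A, (x, y) ∈ O.β → (y, z) ∈ O.β → (x, z) ∈ O.β :=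
  O.hβ.1.1.1.2.2.2

lemma beta_gen' : ∀ i, 1 ≤ i → i ≤ O.K - 1 → (O.a i, O.b i) ∈ O.β := O.hβ.1.2

lemma a1_mem' : O.a 1 ∈ O.B 0 := by
  have hK := O.hK
  exact (O.hab 1 le_rfl (by omega)).1

lemma sigma_mem' {i : ℕ} (hi : i ≤ O.u * O.K) {x : A} (hx : x ∈ O.B i) :
    O.σ i x ∈ O.B 0 ∧ O.π i (O.σ i x) = x := by
  obtain ⟨c, hc, hcx⟩ := (O.hπ i hi).2.2 hx
  have hσ := O.hσ i hi c hc
  rw [← hcx, hσ]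
  exact ⟨hc, rfl⟩

lemma e0_fix' {c : A} (hc : c ∈ O.B 0) : O.e 0 c = c := by
  obtain ⟨n0, ⟨hn1, hnN, h0T⟩, -⟩ := O.hT2 0 (Nat.zero_le _) (dvd_zero _)
  have := O.heK1 n0 hn1 hnN 0 h0T 0 h0T c hc
  rwa [O.hπ0] at this

lemma e0_mem' (z : A) : O.e 0 z ∈ O.B 0 := by
  obtain ⟨n0, ⟨hn1, hnN, h0T⟩, -⟩ := O.hT2 0 (Nat.zero_le _) (dvd_zero _)
  by_cases h : ∃ j ∈ O.T n0, z ∈ O.B j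
  · obtain ⟨j, hjT, hzj⟩ := h
    have hjle : j ≤ O.u * O.K := (O.hT1 n0 hn1 hnN hjT).1
    obtain ⟨c, hc, rfl⟩ := (O.hπ j hjle).2.2 hzj
    rw [O.heK1 n0 hn1 hnN 0 h0T j hjT c hc, O.hπ0]
    exact hc
  · push_neg at h
    rw [O.heK2 n0 hn1 hnN 0 h0T z h, O.hπ0]
    exact O.a1_mem'

lemma ei_fix' {i : ℕ} (hi : i ≤ O.u * O.K) {x : A} (hx : x ∈ O.B i) :
    O.e i x = x := by
  by_cases h0 : i % O.K = 0
  · obtain ⟨n, ⟨hn1, hnN, hiT⟩, -⟩ := O.hT2 i hi (Nat.dvd_of_mod_eq_zero h0)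
    obtain ⟨c, hc, rfl⟩ := (O.hπ i hi).2.2 hx
    exact O.heK1 n hn1 hnN i hiT i hiT c hc
  · exact O.heM1 i hi h0 x hx

lemma btilde_symm' {x y : A} (h : (x, y) ∈ O.btilde) : (y, x) ∈ O.btilde := by
  rcases h with (⟨j, hj, q, hq, heq⟩ | ⟨h1, h2⟩) | ⟨n, hn1, hnN, c, hc, hca, hx, hy⟩
  · refine Or.inl (Or.inl ⟨j, hj, (q.2, q.1), O.beta_symm' _ _ hq, ?_⟩)
    have h1 : x = O.π j q.1 := congrArg Prod.fst heq
    have h2 : y = O.π j q.2 := congrArg Prod.snd heq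
    rw [h1, h2]
  · exact Or.inl (Or.inr ⟨h2, h1⟩)
  · exact Or.inr ⟨n, hn1, hnN, c, hc, hca, hy, hx⟩

/-- Separation when `x` and `y` lie in a common block `B i`. -/
lemma common_sep' (x y : A) (hxy : (x, y) ∉ O.btilde) {i : ℕ} (hi : i ≤ O.u * O.K)
    (hx : x ∈ O.B i) (hy : y ∈ O.B i) :
    ∃ f : A → A, Pol1 O.FA f ∧ (O.e 0 (f x), O.e 0 (f y)) ∉ O.β := by
  refine ⟨O.qi0 i, Pol1.base _ (Or.inl (Or.inr ⟨i, hi, rfl⟩)), ?_⟩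
  obtain ⟨hσxB, hπσx⟩ := O.sigma_mem' hi hx
  obtain ⟨hσyB, hπσy⟩ := O.sigma_mem' hi hy
  have hfx : O.e 0 (O.qi0 i x) = O.σ i x := by
    simp only [qi0, O.ei_fix' hi hx]; exact O.e0_fix' hσxB
  have hfy : O.e 0 (O.qi0 i y) = O.σ i y := by
    simp only [qi0, O.ei_fix' hi hy]; exact O.e0_fix' hσyB
  rw [hfx, hfy]
  intro hβ
  apply hxy
  refine Or.inl (Or.inl ⟨i, hi, (O.σ i x, O.σ i y), hβ, ?_⟩)
  show (x, y) = (O.π i (O.σ i x), O.π i (O.σ i y))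
  rw [hπσx, hπσy]

/-- The main separation lemma: `x ∈ B i`, `y ∉ B i`, and `x` lies in no tie-point class. -/
lemma main_sep' (x y : A) (hxy : (x, y) ∉ O.btilde)
    (htie : ∀ k ≤ O.u * O.K, x ∉ O.tcls k)
    {i : ℕ} (hi : i ≤ O.u * O.K) (hx : x ∈ O.B i) (hyi : y ∉ O.B i)
    {j : ℕ} (hj : j ≤ O.u * O.K) (hy : y ∈ O.B j) :
    ∃ f : A → A, Pol1 O.FA f ∧ (O.e 0 (f x), O.e 0 (f y)) ∉ O.β := by
  have hK := O.hK
  refine ⟨O.qi0 i, Pol1.base _ (Or.inl (Or.inr ⟨i, hi, rfl⟩)), ?_⟩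
  obtain ⟨hσxB, hπσx⟩ := O.sigma_mem' hi hx
  have hfx : O.e 0 (O.qi0 i x) = O.σ i x := by
    simp only [qi0, O.ei_fix' hi hx]; exact O.e0_fix' hσxB
  rw [hfx]
  -- key tie-point fact
  have key : ∀ v : A, (O.a (if i % O.K = 0 then 1 else i % O.K), v) ∈ O.β →
      (O.σ i x, v) ∉ O.β := by
    intro v hv hcv
    refine htie i hi ?_
    have hpair : (O.tie i, x) =
        (O.π i (O.a (if i % O.K = 0 then 1 else i % O.K)), O.π i (O.σ i x)) := by
      simp only [OvII.tie, hπσx]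
    exact ⟨(O.a (if i % O.K = 0 then 1 else i % O.K), O.σ i x),
      O.beta_trans' _ _ _ hv (O.beta_symm' _ _ hcv), hpair⟩
  by_cases h0 : i % O.K = 0
  · -- i is a multiple of K
    rw [if_pos h0] at key
    obtain ⟨n, ⟨hn1, hnN, hiT⟩, -⟩ := O.hT2 i hi (Nat.dvd_of_mod_eq_zero h0)
    by_cases hyB : ∃ j' ∈ O.T n, y ∈ O.B j'
    · -- y in a block of the same partition class: wing case
      obtain ⟨j', hj'T, hyj'⟩ := hyB
      have hj'le : j' ≤ O.u * O.K := (O.hT1 n hn1 hnN hj'T).1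
      obtain ⟨hσyB, hπσy⟩ := O.sigma_mem' hj'le hyj'
      have hfy : O.e 0 (O.qi0 i y) = O.σ j' y := by
        have h1 : O.e i y = O.π i (O.σ j' y) := by
          conv_lhs => rw [← hπσy]
          exact O.heK1 n hn1 hnN i hiT j' hj'T _ hσyB
        simp only [qi0, h1, O.hσ i hi _ hσyB]
        exact O.e0_fix' hσyB
      rw [hfy]
      intro hβxy
      by_cases hca : (O.a 1, O.σ i x) ∈ O.β
      · exact key (O.σ j' y) (O.beta_trans' _ _ _ hca hβxy) hβxy
      · apply hxy
        refine Or.inr ⟨n, hn1, hnN, O.σ i x, hσxB,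
          fun h => hca (O.beta_symm' _ _ h), ?_, ?_⟩
        · exact Set.mem_iUnion₂.mpr ⟨i, hiT, ⟨O.σ i x, O.beta_refl' _ hσxB, hπσx⟩⟩
        · exact Set.mem_iUnion₂.mpr ⟨j', hj'T, ⟨O.σ j' y, hβxy, hπσy⟩⟩
    · -- y in no block of the partition class: collapses to the tie point a₁
      push_neg at hyB
      have hfy : O.e 0 (O.qi0 i y) = O.a 1 := by
        simp only [qi0, O.heK2 n hn1 hnN i hiT y hyB, O.hσ i hi _ O.a1_mem']
        exact O.e0_fix' O.a1_mem'
      rw [hfy]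
      exact key (O.a 1) (O.beta_refl' _ O.a1_mem')
  · -- i not a multiple of K
    rw [if_neg h0] at key
    have hm1 : 1 ≤ i % O.K := Nat.pos_of_ne_zero h0
    have hm2 : i % O.K ≤ O.K - 1 := by
      have := Nat.mod_lt i (show 0 < O.K by omega); omega
    obtain ⟨haB, hbB⟩ := O.hab (i % O.K) hm1 hm2
    rcases lt_trichotomy j i with hji | hji | hji
    · have hfy : O.e 0 (O.qi0 i y) = O.a (i % O.K) := by
        simp only [qi0, O.heM2 i hi h0 j hji y hy hyi, O.hσ i hi _ haB]
        exact O.e0_fix' haB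
      rw [hfy]
      exact key _ (O.beta_refl' _ haB)
    · exact absurd (hji ▸ hy) hyi
    · have hfy : O.e 0 (O.qi0 i y) = O.b (i % O.K) := by
        simp only [qi0, O.heM3 i hi h0 j hji hj y hy hyi, O.hσ i hi _ hbB]
        exact O.e0_fix' hbB
      rw [hfy]
      exact key _ (O.beta_gen' _ hm1 hm2)

lemma pol1_pres' {βh : Set (A × A)} (hcon : IsCon O.FA βh) :
    ∀ f : A → A, Pol1 O.FA f → ∀ x y : A, (x, y) ∈ βh → (f x, f y) ∈ βh := by
  intro f hf
  induction hf with
  | base f hfF => exact fun x y h => hcon.2 f hfF (x, y) h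
  | id => exact fun x y h => h
  | const a => exact fun x y _ => hcon.1.1 a
  | comp f g hf hg ihf ihg => exact fun x y h => ihf _ _ (ihg _ _ h)

end OvII

end Overalg

open Overalg OvII in
/-- In an overalgebra `𝐀` of the second type, if `(x, y) ∈ A × A` does not belong to
`β̃`, then there exists `f ∈ Pol₁(𝐀)` with `(e 0 (f x), e 0 (f y)) ∉ β`; consequently
`β̃ ≥ β̂`, the largest congruence of `𝐀` restricting to `β` on `B`. -/
theorem btildeII_ge_hat {A : Type*} (O : OvII A) :
    (∀ x y : A, (x, y) ∉ O.btilde →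
      ∃ f : A → A, Pol1 O.FA f ∧ (O.e 0 (f x), O.e 0 (f y)) ∉ O.β) ∧
    (∀ βh : Set (A × A),
      IsGreatest {α : Set (A × A) | IsCon O.FA α ∧ α ∩ (O.B 0 ×ˢ O.B 0) = O.β} βh →
      βh ⊆ O.btilde) := by
  classical
  have part1 : ∀ x y : A, (x, y) ∉ O.btilde →
      ∃ f : A → A, Pol1 O.FA f ∧ (O.e 0 (f x), O.e 0 (f y)) ∉ O.β := by
    intro x y hxy
    obtain ⟨i, hi, hx⟩ := O.hA x
    obtain ⟨j, hj, hy⟩ := O.hA y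
    by_cases hc : ∃ k ≤ O.u * O.K, x ∈ O.B k ∧ y ∈ O.B k
    · obtain ⟨k, hk, hxk, hyk⟩ := hc
      exact O.common_sep' x y hxy hk hxk hyk
    · have hxy_tie : ¬((∃ k ≤ O.u * O.K, x ∈ O.tcls k) ∧
          (∃ k ≤ O.u * O.K, y ∈ O.tcls k)) :=
        fun h => hxy (Or.inl (Or.inr h))
      rcases not_and_or.mp hxy_tie with hxt | hyt
      · push_neg at hxt
        exact O.main_sep' x y hxy hxt hi hx
          (fun hyBi => hc ⟨i, hi, hx, hyBi⟩) hj hy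
      · push_neg at hyt
        obtain ⟨f, hf, hsep⟩ := O.main_sep' y x
          (fun h => hxy (O.btilde_symm' h)) hyt hj hy
          (fun hxBj => hc ⟨j, hj, hxBj, hy⟩) hi hx
        exact ⟨f, hf, fun h => hsep (O.beta_symm' _ _ h)⟩
  refine ⟨part1, ?_⟩
  rintro βh ⟨⟨hcon, hres⟩, -⟩ p hp
  by_contra hnb
  obtain ⟨f, hfP, hsep⟩ := part1 p.1 p.2 (by rwa [Prod.mk.eta])
  have h1 : (f p.1, f p.2) ∈ βh := O.pol1_pres' hcon f hfP p.1 p.2 (by rwa [Prod.mk.eta])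
  have h2 : (O.qi0 0 (f p.1), O.qi0 0 (f p.2)) ∈ βh :=
    hcon.2 (O.qi0 0) (Or.inl (Or.inr ⟨0, Nat.zero_le _, rfl⟩)) _ h1
  have hq0 : ∀ z : A, O.qi0 0 z = O.e 0 z := by
    intro z
    have hm := O.e0_mem' z
    have := O.hσ 0 (Nat.zero_le _) _ hm
    rw [O.hπ0] at this
    simpa [OvII.qi0] using this
  rw [hq0, hq0] at h2
  have h3 : (O.e 0 (f p.1), O.e 0 (f p.2)) ∈ βh ∩ (O.B 0 ×ˢ O.B 0) :=
    ⟨h2, O.e0_mem' _, O.e0_mem' _⟩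
  rw [hres] at h3
  exact hsep h3
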